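/- arXiv:1303.0662 — 4 statements merged into one kernel-verified Lean document; each statement's English description precedes it below -/
import Mathlib

section
/- Let 𝒯 be a pretriangulated category and F : 𝒯 ⥤ 𝒯 an additive functor equipped with a commutation isomorphism F ∘ [1] ≅ [1] ∘ F with the shift functor, such that F sends distinguished triangles to distinguished triangles. Equip the category F-𝒯 of F-objects with the shift (E, Φ)[1] := (E[1], Φ'), where Φ' is the composite of Φ[1] : E[1] → (F E)[1] with the commutation isomorphism (F E)[1] ≅ F(E[1]), and declare a triangle in F-𝒯 to be distinguished if its image under the forgetful functor is a distinguished triangle of 𝒯. Then F-𝒯 satisfies the axioms TR1 and TR2 of triangulated categories: (TR1) every triangle isomorphic to a distinguished triangle is distinguished, for every F-object X the triangle X →^{id} X → 0 → X[1] is distinguished, and every morphism u : X → Y of F-objects can be completed to a distinguished triangle X → Y → Z → X[1] in F-𝒯; (TR2) a triangle in F-𝒯 is distinguished if and only if its rotated triangle (with the usual sign convention) is distinguished. -/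
/-!
Statement 1: let 𝒯 be a pretriangulated category and F : 𝒯 ⥤ 𝒯 an additive functor
commuting with the shift and sending distinguished triangles to distinguished triangles.
Equip the category F-𝒯 of F-objects with the induced shift and declare a triangle of
F-objects distinguished if its underlying triangle is distinguished. Then F-𝒯 satisfies
TR1 (closure under isomorphism, contractible triangles, completion of morphisms) and
TR2 (rotation).
-/

open CategoryTheory CategoryTheory.Limits CategoryTheory.Pretriangulated ZeroObject

universe v u

/-- An `F`-object of `C`: an object `E` together with an isomorphism `Φ : E ≅ F E`. -/
structure FObj (C : Type u) [Category.{v} C] (F : C ⥤ C) : Type max u v where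
  obj : C
  iso : obj ≅ F.obj obj

/-- A morphism of `F`-objects. -/
@[ext]
structure FHom {C : Type u} [Category.{v} C] {F : C ⥤ C} (X Y : FObj C F) : Type v where
  hom : X.obj ⟶ Y.obj
  comm : hom ≫ Y.iso.hom = X.iso.hom ≫ F.map hom

/-- The category of `F`-objects. -/
instance FObj.category {C : Type u} [Category.{v} C] (F : C ⥤ C) :
    Category (FObj C F) where
  Hom X Y := FHom X Y
  id X := ⟨𝟙 X.obj, by simp⟩
  comp f g := ⟨f.hom ≫ g.hom, by
    rw [Category.assoc, g.comm, ← Category.assoc, f.comm, Category.assoc, F.map_comp]⟩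
  id_comp f := by apply FHom.ext; simp
  comp_id f := by apply FHom.ext; simp
  assoc f g h := by apply FHom.ext; simp

section Triangulated

variable {C : Type u} [Category.{v} C] [HasZeroObject C] [Preadditive C] [HasShift C ℤ]
  [∀ n : ℤ, (shiftFunctor C n).Additive] [Pretriangulated C]
  (F : C ⥤ C) [F.Additive] [F.CommShift ℤ] [F.IsTriangulated]

/-- The shift of an `F`-object: `(E, Φ)[1] = (E[1], Φ')` where `Φ'` is `Φ[1]` composed
with the commutation isomorphism `(F E)[1] ≅ F (E[1])`. -/
noncomputable def shiftF (X : FObj C F) : FObj C F where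
  obj := X.obj⟦(1 : ℤ)⟧
  iso := (shiftFunctor C (1 : ℤ)).mapIso X.iso ≪≫ ((F.commShiftIso (1 : ℤ)).app X.obj).symm

/-- The shift of a morphism of `F`-objects. -/
noncomputable def shiftFMap {X Y : FObj C F} (f : X ⟶ Y) : shiftF F X ⟶ shiftF F Y where
  hom := f.hom⟦(1 : ℤ)⟧'
  comm := by
    dsimp [shiftF]
    rw [← Functor.map_comp_assoc, f.comm, Functor.map_comp_assoc]
    have h := (F.commShiftIso (1 : ℤ)).inv.naturality f.hom
    dsimp at h
    rw [h, Category.assoc]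

/-- The negative of a morphism of `F`-objects. -/
def FHom.neg {X Y : FObj C F} (f : X ⟶ Y) : X ⟶ Y where
  hom := -f.hom
  comm := by simp [f.comm]

/-- A triangle of `F`-objects. -/
structure FTriangle where
  X : FObj C F
  Y : FObj C F
  Z : FObj C F
  f : X ⟶ Y
  g : Y ⟶ Z
  h : Z ⟶ shiftF F X

/-- The underlying triangle in `C` of a triangle of `F`-objects. -/
noncomputable def FTriangle.toTriangle (T : FTriangle F) : Triangle C :=
  Triangle.mk T.f.hom T.g.hom T.h.hom

/-- A triangle of `F`-objects is distinguished if its underlying triangle is. -/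
def FTriangle.IsDist (T : FTriangle F) : Prop := T.toTriangle ∈ distTriang C

/-- The zero `F`-object. -/
noncomputable def zeroF : FObj C F :=
  ⟨0, (isZero_zero C).iso (F.map_isZero (isZero_zero C))⟩

/-- The contractible triangle `X ⟶ X ⟶ 0 ⟶ X⟦1⟧` of `F`-objects. -/
noncomputable def contractibleFTriangle (X : FObj C F) : FTriangle F where
  X := X
  Y := X
  Z := zeroF F
  f := 𝟙 X
  g := ⟨0, by simp⟩
  h := ⟨0, by simp⟩

/-- The rotation of a triangle of `F`-objects, with the usual sign convention. -/
noncomputable def FTriangle.rotate (T : FTriangle F) : FTriangle F where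
  X := T.Y
  Y := T.Z
  Z := shiftF F T.X
  f := T.g
  g := T.h
  h := FHom.neg F (shiftFMap F T.f)

end Triangulated

/-!
Distinguished triangles of `F`-objects are detected on underlying triangles, so isomorphism
closure, contractible triangles and rotation reduce to the same axioms in `C`. To complete a
morphism `u : X ⟶ Y`, complete `u.hom` to a distinguished triangle `T` of `C`: as `F` is
triangulated, `F T` is distinguished, so the isomorphisms `X ≅ F X` and `Y ≅ F Y` extend to an
isomorphism `T ≅ F T`, whose third component makes the cone an `F`-object.
-/

def FObj.forget {C : Type u} [Category.{v} C] (F : C ⥤ C) : FObj C F ⥤ C where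
  obj X := X.obj
  map f := f.hom

section Pretriangulated

variable {C : Type u} [Category.{v} C] [HasZeroObject C] [Preadditive C] [HasShift C ℤ]
  [∀ n : ℤ, (shiftFunctor C n).Additive] [Pretriangulated C] (F : C ⥤ C) [F.CommShift ℤ]

lemma FTriangle.IsDist.of_iso {T T' : FTriangle F} (e₁ : T.X ⟶ T'.X) (e₂ : T.Y ⟶ T'.Y)
    (e₃ : T.Z ⟶ T'.Z) [IsIso e₁] [IsIso e₂] [IsIso e₃] (comm₁ : T.f ≫ e₂ = e₁ ≫ T'.f)
    (comm₂ : T.g ≫ e₃ = e₂ ≫ T'.g) (comm₃ : T.h ≫ shiftFMap F e₁ = e₃ ≫ T'.h)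
    (hT : T.IsDist F) : T'.IsDist F :=
  isomorphic_distinguished _ hT _ <| Iso.symm <|
    Triangle.isoMk (T.toTriangle F) (T'.toTriangle F) ((FObj.forget F).mapIso (asIso e₁))
      ((FObj.forget F).mapIso (asIso e₂)) ((FObj.forget F).mapIso (asIso e₃))
      (congrArg FHom.hom comm₁) (congrArg FHom.hom comm₂) (congrArg FHom.hom comm₃)

lemma FTriangle.isDist_iff_isDist_rotate [F.Additive] (T : FTriangle F) :
    T.IsDist F ↔ (T.rotate F).IsDist F :=
  rotate_distinguished_triangle (T.toTriangle F)

variable [F.IsTriangulated]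

lemma exists_iso_map_obj₃_of_distinguished {A B Z : C} {u : A ⟶ B} {g : B ⟶ Z}
    {h : Z ⟶ A⟦(1 : ℤ)⟧} (hT : Triangle.mk u g h ∈ distTriang C) (a : A ≅ F.obj A) (b : B ≅ F.obj B)
    (hu : u ≫ b.hom = a.hom ≫ F.map u) :
    ∃ c : Z ≅ F.obj Z, g ≫ c.hom = b.hom ≫ F.map g ∧
      h ≫ a.hom⟦(1 : ℤ)⟧' = c.hom ≫ F.map h ≫ (F.commShiftIso (1 : ℤ)).hom.app A := by
  obtain ⟨e, he₁, he₂⟩ :=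
    exists_iso_of_arrow_iso _ _ hT (F.map_distinguished _ hT) (Arrow.isoMk a b hu.symm)
  refine ⟨Triangle.π₃.mapIso e, ?_, ?_⟩
  · have := e.hom.comm₂
    rwa [he₂] at this
  · have := e.hom.comm₃
    rwa [he₁] at this

lemma contractibleFTriangle_isDist (X : FObj C F) : (contractibleFTriangle F X).IsDist F :=
  contractible_distinguished X.obj

lemma FTriangle.exists_isDist_mk {X Y : FObj C F} (u : X ⟶ Y) :
    ∃ (Z : FObj C F) (g : Y ⟶ Z) (h : Z ⟶ shiftF F X), (FTriangle.mk X Y Z u g h).IsDist F := by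
  obtain ⟨Z, g, h, hT⟩ := distinguished_cocone_triangle u.hom
  obtain ⟨c, hg, hh⟩ := exists_iso_map_obj₃_of_distinguished F hT X.iso Y.iso u.comm
  refine ⟨⟨Z, c⟩, ⟨g, hg⟩, ⟨h, ?_⟩, hT⟩
  change h ≫ X.iso.hom⟦(1 : ℤ)⟧' ≫ (F.commShiftIso (1 : ℤ)).inv.app X.obj = c.hom ≫ F.map h
  rw [reassoc_of% hh]
  simp

end Pretriangulated

section Triangulated

variable {C : Type u} [Category.{v} C] [HasZeroObject C] [Preadditive C] [HasShift C ℤ]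
  [∀ n : ℤ, (shiftFunctor C n).Additive] [Pretriangulated C]
  (F : C ⥤ C) [F.Additive] [F.CommShift ℤ] [F.IsTriangulated]

theorem stmt_1 :
    -- (TR1 a) a triangle of F-objects isomorphic to a distinguished one is distinguished
    (∀ (T T' : FTriangle F) (e₁ : T.X ⟶ T'.X) (e₂ : T.Y ⟶ T'.Y) (e₃ : T.Z ⟶ T'.Z),
      IsIso e₁ → IsIso e₂ → IsIso e₃ →
      T.f ≫ e₂ = e₁ ≫ T'.f →
      T.g ≫ e₃ = e₂ ≫ T'.g →
      T.h ≫ shiftFMap F e₁ = e₃ ≫ T'.h →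
      T.IsDist → T'.IsDist) ∧
    -- (TR1 b) the triangle X ⟶ X ⟶ 0 ⟶ X⟦1⟧ is distinguished
    (∀ X : FObj C F, (contractibleFTriangle F X).IsDist) ∧
    -- (TR1 c) any morphism of F-objects extends to a distinguished triangle
    (∀ (X Y : FObj C F) (u : X ⟶ Y),
      ∃ (Z : FObj C F) (g : Y ⟶ Z) (h : Z ⟶ shiftF F X),
        (FTriangle.mk X Y Z u g h).IsDist) ∧
    -- (TR2) a triangle is distinguished iff its rotation is distinguished
    (∀ T : FTriangle F, T.IsDist ↔ FTriangle.IsDist F (FTriangle.rotate F T)) := by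
  exact ⟨fun _ _ e₁ e₂ e₃ _ _ _ => FTriangle.IsDist.of_iso F e₁ e₂ e₃,
    contractibleFTriangle_isDist F, fun _ _ => FTriangle.exists_isDist_mk F,
    FTriangle.isDist_iff_isDist_rotate F⟩

end Triangulated
end

section
/- Let k be a field, V a finite-dimensional k-vector space, N : V → V a nilpotent k-linear endomorphism, and (M_i)_{i ∈ ℤ} its monodromy filtration. Then the filtration induced on ker N, given by (M_i ∩ ker N)_{i ∈ ℤ}, satisfies (M_i ∩ ker N)/(M_{i−1} ∩ ker N) = 0 for every i > 0 (equivalently, ker N ⊆ M_0); and the filtration induced on coker N = V / N(V), given by the images of the M_i, satisfies gr_i(coker N) = 0 for every i < 0 (equivalently, M_{−1} ⊆ N(V)). -/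
/-!
(Preliminaries: the monodromy filtration.)
-/

/-- The map `gr_p V → gr_q V` (quotients of submodules `p/p'` and `q/q'`) induced by a
linear map `f` with `f p ⊆ q` and `f p' ⊆ q'`. -/
noncomputable def inducedGr {k V : Type*} [Field k] [AddCommGroup V] [Module k V]
    (f : V →ₗ[k] V) (p p' q q' : Submodule k V)
    (hpq : ∀ x ∈ p, f x ∈ q) (hp' : p' ≤ p) (hq' : q' ≤ q)
    (h2 : ∀ x ∈ p', f x ∈ q') :
    (p ⧸ p'.comap p.subtype) →ₗ[k] (q ⧸ q'.comap q.subtype) :=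
  Submodule.mapQ (p'.comap p.subtype) (q'.comap q.subtype) (f.restrict hpq)
    (by
      intro x hx
      simp only [Submodule.mem_comap, LinearMap.restrict_apply] at hx ⊢
      exact h2 _ hx)

/-- `M` is the monodromy filtration of the nilpotent endomorphism `N`:
an increasing filtration, exhaustive and separated (eventually `⊥` below and `⊤` above),
satisfying `N (M i) ⊆ M (i-2)`, such that for every `j ≥ 0`, `N^j` induces an isomorphism
`gr^M_j = M j / M (j-1) ≅ gr^M_{-j} = M (-j) / M (-j-1)`. -/
def IsMonodromyFiltration {k V : Type*} [Field k] [AddCommGroup V] [Module k V]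
    (N : V →ₗ[k] V) (M : ℤ → Submodule k V) : Prop :=
  Monotone M ∧
  (∃ a : ℤ, ∀ i ≤ a, M i = ⊥) ∧
  (∃ b : ℤ, ∀ i : ℤ, b ≤ i → M i = ⊤) ∧
  (∀ i : ℤ, ∀ x ∈ M i, N x ∈ M (i - 2)) ∧
  (∀ (j : ℕ)
    (h1 : ∀ x ∈ M (j : ℤ), (N ^ j) x ∈ M (-(j : ℤ)))
    (h2 : ∀ x ∈ M ((j : ℤ) - 1), (N ^ j) x ∈ M (-(j : ℤ) - 1))
    (hp : M ((j : ℤ) - 1) ≤ M (j : ℤ)) (hq : M (-(j : ℤ) - 1) ≤ M (-(j : ℤ))),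
    Function.Bijective
      (inducedGr (N ^ j) (M (j : ℤ)) (M ((j : ℤ) - 1)) (M (-(j : ℤ))) (M (-(j : ℤ) - 1))
        h1 hp hq h2))


/-!
Statement 6: if `M` is the monodromy filtration of a nilpotent `N`, then the induced
filtration on `ker N` has vanishing graded pieces in positive degrees (equivalently
`ker N ⊆ M 0`), and the induced filtration on `coker N = V / N(V)` has vanishing graded
pieces in negative degrees (equivalently `M (−1) ⊆ N(V)`).
-/
theorem stmt_6 {k V : Type*} [Field k] [AddCommGroup V] [Module k V]
    [FiniteDimensional k V] (N : V →ₗ[k] V) (hN : IsNilpotent N)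
    (M : ℤ → Submodule k V) (hM : IsMonodromyFiltration N M) :
    (∀ i : ℤ, 0 < i → M i ⊓ LinearMap.ker N ≤ M (i - 1)) ∧
    LinearMap.ker N ≤ M 0 ∧
    (∀ i : ℤ, i < 0 → M i ≤ M (i - 1) ⊔ LinearMap.range N) ∧
    M (-1) ≤ LinearMap.range N := by
  obtain ⟨hmono, ⟨a, ha⟩, ⟨b, hb⟩, hNstep, hgr⟩ := hM
  have hsub : ∀ (j : ℕ) (i : ℤ), ∀ x ∈ M i, (N ^ j) x ∈ M (i - 2 * j) := by
    intro j
    induction j with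
    | zero => intro i x hx; simpa using hx
    | succ n ih =>
      intro i x hx
      have h2 := ih (i - 2) (N x) (hNstep i x hx)
      have e : (N ^ (n + 1)) x = (N ^ n) (N x) := by
        rw [pow_succ]; rfl
      rw [e]
      have e2 : i - 2 - 2 * (n : ℤ) = i - 2 * ((n : ℕ) + 1 : ℕ) := by push_cast; ring
      rwa [e2] at h2
  have H1 : ∀ (j : ℕ), ∀ x ∈ M ((j : ℤ)), (N ^ j) x ∈ M (-(j : ℤ)) := by
    intro j x hx
    have := hsub j j x hx
    have e : (j : ℤ) - 2 * j = -(j : ℤ) := by ring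
    rwa [e] at this
  have H2 : ∀ (j : ℕ), ∀ x ∈ M ((j : ℤ) - 1), (N ^ j) x ∈ M (-(j : ℤ) - 1) := by
    intro j x hx
    have := hsub j ((j : ℤ) - 1) x hx
    have e : (j : ℤ) - 1 - 2 * j = -(j : ℤ) - 1 := by ring
    rwa [e] at this
  have key1 : ∀ (j : ℕ), 1 ≤ j → ∀ x ∈ M (j : ℤ), N x = 0 → x ∈ M ((j : ℤ) - 1) := by
    intro j hj x hx hNx
    have hp : M ((j : ℤ) - 1) ≤ M (j : ℤ) := hmono (by omega)
    have hq : M (-(j : ℤ) - 1) ≤ M (-(j : ℤ)) := hmono (by omega)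
    have hbij := hgr j (H1 j) (H2 j) hp hq
    have hNjx : (N ^ j) x = 0 := by
      obtain ⟨m, rfl⟩ : ∃ m, j = m + 1 := ⟨j - 1, by omega⟩
      rw [pow_succ]
      show (N ^ m) (N x) = 0
      rw [hNx, map_zero]
    have hz : (Submodule.Quotient.mk (⟨x, hx⟩ : M (j : ℤ)) :
        M (j : ℤ) ⧸ (M ((j : ℤ) - 1)).comap (M (j : ℤ)).subtype) = 0 := by
      apply hbij.injective
      rw [map_zero]
      show Submodule.mapQ _ _ _ _ _ = 0
      rw [Submodule.mapQ_apply, Submodule.Quotient.mk_eq_zero]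
      simp only [Submodule.mem_comap, LinearMap.restrict_apply, Submodule.subtype_apply]
      simpa [hNjx] using Submodule.zero_mem (M (-(j : ℤ) - 1))
    rw [Submodule.Quotient.mk_eq_zero] at hz
    exact hz
  have key2 : ∀ (j : ℕ), 1 ≤ j →
      M (-(j : ℤ)) ≤ M (-(j : ℤ) - 1) ⊔ LinearMap.range N := by
    intro j hj x hx
    have hp : M ((j : ℤ) - 1) ≤ M (j : ℤ) := hmono (by omega)
    have hq : M (-(j : ℤ) - 1) ≤ M (-(j : ℤ)) := hmono (by omega)
    have hbij := hgr j (H1 j) (H2 j) hp hq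
    obtain ⟨ybar, hy⟩ := hbij.surjective (Submodule.Quotient.mk ⟨x, hx⟩)
    obtain ⟨y, rfl⟩ := Submodule.Quotient.mk_surjective _ ybar
    unfold inducedGr at hy
    rw [Submodule.mapQ_apply, Submodule.Quotient.eq] at hy
    have hy' := hy
    simp only [Submodule.mem_comap] at hy'
    have hdiff : (N ^ j) (y : V) - x ∈ M (-(j : ℤ) - 1) := hy'
    have hrange : (N ^ j) (y : V) ∈ LinearMap.range N := by
      obtain ⟨m, rfl⟩ : ∃ m, j = m + 1 := ⟨j - 1, by omega⟩
      rw [pow_succ']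
      exact ⟨(N ^ m) y, rfl⟩
    have : x = -((N ^ j) (y : V) - x) + (N ^ j) (y : V) := by abel
    rw [this]
    exact Submodule.add_mem_sup (Submodule.neg_mem _ hdiff) hrange
  have part1 : ∀ i : ℤ, 0 < i → M i ⊓ LinearMap.ker N ≤ M (i - 1) := by
    intro i hi x hx
    obtain ⟨hx1, hx2⟩ := hx
    have hj : ((i.toNat : ℤ)) = i := Int.toNat_of_nonneg hi.le
    have := key1 i.toNat (by omega) x (by rwa [hj]) hx2
    rwa [hj] at this
  have part2 : LinearMap.ker N ≤ M 0 := by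
    intro x hx
    have hxker : N x = 0 := hx
    have hdesc : ∀ n : ℕ, x ∈ M (n : ℤ) → x ∈ M 0 := by
      intro n
      induction n with
      | zero => intro h; simpa using h
      | succ m ih =>
        intro h
        have := key1 (m + 1) (by omega) x (by exact_mod_cast h) hxker
        apply ih
        have e : ((m : ℕ) + 1 : ℤ) - 1 = (m : ℤ) := by push_cast; ring
        rw [← e]; exact_mod_cast this
    have hn : x ∈ M ((max b 0).toNat : ℤ) := by
      rw [hb _ (by omega)]; trivial
    exact hdesc _ hn
  have part3 : ∀ i : ℤ, i < 0 → M i ≤ M (i - 1) ⊔ LinearMap.range N := by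
    intro i hi
    have hj : -(((-i).toNat : ℤ)) = i := by omega
    have := key2 (-i).toNat (by omega)
    rwa [hj] at this
  have part4 : M (-1) ≤ LinearMap.range N := by
    have hdesc : ∀ n : ℕ, M (-1) ≤ M (-1 - n) ⊔ LinearMap.range N := by
      intro n
      induction n with
      | zero => simpa using le_sup_left
      | succ m ih =>
        refine ih.trans (sup_le ?_ le_sup_right)
        have h := part3 (-1 - m) (by omega)
        have e : -1 - (m : ℤ) - 1 = -1 - ((m : ℕ) + 1 : ℕ) := by push_cast; ring
        rw [e] at h
        exact h.trans (sup_le (le_sup_left) le_sup_right)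
    have hn := hdesc (-1 - min a (-1)).toNat
    have hbot : M (-1 - ((-1 - min a (-1)).toNat : ℤ)) = ⊥ := by
      apply ha; omega
    rw [hbot, bot_sup_eq] at hn
    exact hn
  exact ⟨part1, part2, part3, part4⟩
end

section
/- Let k be a field, V a finite-dimensional k-vector space, and N : V → V a nilpotent k-linear endomorphism with monodromy filtration (M_i(V))_{i ∈ ℤ}. Let N^⊤ : V^* → V^* be the transpose endomorphism φ ↦ φ ∘ N of the dual space V^* = Hom_k(V, k), which is again nilpotent, and let (M_i(V^*))_{i ∈ ℤ} be its monodromy filtration. Then for every i ∈ ℤ one has M_i(V^*) = (M_{−i−1}(V))^⊥ := { φ ∈ V^* : φ vanishes on M_{−i−1}(V) }. -/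
namespace MonodromyAux

open Module

variable {k V : Type*} [Field k] [AddCommGroup V] [Module k V]

lemma pow_apply_zero {N : V →ₗ[k] V} {a e : ℕ} (h : a ≤ e) {x : V}
    (hx : (N ^ a) x = 0) : (N ^ e) x = 0 := by
  have he : N ^ e = N ^ (e - a) * N ^ a := by rw [← pow_add, Nat.sub_add_cancel h]
  rw [he, Module.End.mul_apply, hx, map_zero]

/-- The canonical candidate for the monodromy filtration. -/
noncomputable def Kfil (N : V →ₗ[k] V) (i : ℤ) : Submodule k V :=
  ⨆ j : ℕ, LinearMap.range (N ^ j) ⊓ LinearMap.ker (N ^ (i + j + 1).toNat)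

lemma mem_Kfil_of {N : V →ₗ[k] V} {i : ℤ} (j : ℕ) {x : V}
    (hx : x ∈ LinearMap.range (N ^ j) ⊓ LinearMap.ker (N ^ (i + j + 1).toNat)) :
    x ∈ Kfil N i :=
  (le_iSup (fun j : ℕ => LinearMap.range (N ^ j) ⊓ LinearMap.ker (N ^ (i + j + 1).toNat)) j) hx

lemma Kfil_mono {N : V →ₗ[k] V} {i i' : ℤ} (h : i ≤ i') : Kfil N i ≤ Kfil N i' := by
  apply iSup_le; intro j
  refine le_trans (inf_le_inf_left _ ?_)
    (le_iSup (fun j : ℕ => LinearMap.range (N ^ j) ⊓ LinearMap.ker (N ^ (i' + j + 1).toNat)) j)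
  intro x hx
  simp only [LinearMap.mem_ker] at hx ⊢
  exact pow_apply_zero (by omega) hx

lemma Kfil_map {N : V →ₗ[k] V} (c : ℕ) (l : ℤ) {x : V} (hx : x ∈ Kfil N l) :
    (N ^ c) x ∈ Kfil N (l - 2 * c) := by
  revert x hx
  suffices h : Submodule.map (N ^ c) (Kfil N l) ≤ Kfil N (l - 2 * c) by
    intro x hx; exact h ⟨x, hx, rfl⟩
  rw [Kfil, Submodule.map_iSup]
  apply iSup_le; intro j
  intro y hy
  rw [Submodule.mem_map] at hy
  obtain ⟨z, hz, rfl⟩ := hy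
  rw [Submodule.mem_inf] at hz
  obtain ⟨⟨u, rfl⟩, hzk⟩ := hz
  rw [LinearMap.mem_ker] at hzk
  apply mem_Kfil_of (c + j)
  rw [Submodule.mem_inf]
  constructor
  · exact ⟨u, by rw [pow_add, Module.End.mul_apply]⟩
  · rw [LinearMap.mem_ker]
    have h1 : (N ^ (l - 2 * c + ((c + j : ℕ) : ℤ) + 1).toNat) ((N ^ c) ((N ^ j) u))
        = (N ^ ((l - 2 * c + ((c + j : ℕ) : ℤ) + 1).toNat + c)) ((N ^ j) u) := by
      rw [pow_add, Module.End.mul_apply]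
    rw [h1]
    exact pow_apply_zero (by omega) hzk

variable {N : V →ₗ[k] V} {M : ℤ → Submodule k V}

lemma shiftc (hM : IsMonodromyFiltration N M) (c : ℕ) :
    ∀ i : ℤ, ∀ x ∈ M i, (N ^ c) x ∈ M (i - 2 * c) := by
  induction c with
  | zero => intro i x hx; simpa using hx
  | succ c ih =>
    intro i x hx
    rw [pow_succ, Module.End.mul_apply]
    have h2 := ih (i - 2) (N x) (hM.2.2.2.1 i x hx)
    have h3 : i - 2 - 2 * (c : ℤ) = i - 2 * ((c + 1 : ℕ) : ℤ) := by push_cast; ring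
    rwa [h3] at h2

lemma h1c (hM : IsMonodromyFiltration N M) (j : ℕ) :
    ∀ x ∈ M (j : ℤ), (N ^ j) x ∈ M (-(j : ℤ)) := by
  intro x hx
  have := shiftc hM j (j : ℤ) x hx
  rwa [show (j : ℤ) - 2 * (j : ℤ) = -(j : ℤ) by ring] at this

lemma h2c (hM : IsMonodromyFiltration N M) (j : ℕ) :
    ∀ x ∈ M ((j : ℤ) - 1), (N ^ j) x ∈ M (-(j : ℤ) - 1) := by
  intro x hx
  have := shiftc hM j ((j : ℤ) - 1) x hx
  rwa [show (j : ℤ) - 1 - 2 * (j : ℤ) = -(j : ℤ) - 1 by ring] at this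

lemma inj_step (hM : IsMonodromyFiltration N M) (j : ℕ) (x : V) (hx : x ∈ M (j : ℤ))
    (hNx : (N ^ j) x ∈ M (-(j : ℤ) - 1)) : x ∈ M ((j : ℤ) - 1) := by
  have hb := hM.2.2.2.2 j (h1c hM j) (h2c hM j)
    (hM.1 (by omega : (j : ℤ) - 1 ≤ (j : ℤ))) (hM.1 (by omega : -(j : ℤ) - 1 ≤ -(j : ℤ)))
  have h0 : inducedGr (N ^ j) (M (j : ℤ)) (M ((j : ℤ) - 1)) (M (-(j : ℤ))) (M (-(j : ℤ) - 1))
      (h1c hM j) (hM.1 (by omega)) (hM.1 (by omega)) (h2c hM j)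
      (Submodule.Quotient.mk ⟨x, hx⟩) = 0 := by
    unfold inducedGr
    rw [Submodule.mapQ_apply, Submodule.Quotient.mk_eq_zero]
    simpa [Submodule.mem_comap, LinearMap.restrict_apply] using hNx
  have h1 := hb.1 (a₁ := Submodule.Quotient.mk ⟨x, hx⟩) (a₂ := 0) (by rw [h0, map_zero])
  rw [Submodule.Quotient.mk_eq_zero] at h1
  simpa [Submodule.mem_comap] using h1

lemma surj_step (hM : IsMonodromyFiltration N M) (j : ℕ) (z : V) (hz : z ∈ M (-(j : ℤ))) :
    ∃ y ∈ M (j : ℤ), z - (N ^ j) y ∈ M (-(j : ℤ) - 1) := by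
  have hb := hM.2.2.2.2 j (h1c hM j) (h2c hM j)
    (hM.1 (by omega : (j : ℤ) - 1 ≤ (j : ℤ))) (hM.1 (by omega : -(j : ℤ) - 1 ≤ -(j : ℤ)))
  obtain ⟨w, hw⟩ := hb.2 (Submodule.Quotient.mk ⟨z, hz⟩)
  obtain ⟨y, rfl⟩ := Submodule.Quotient.mk_surjective _ w
  refine ⟨y.1, y.2, ?_⟩
  unfold inducedGr at hw
  rw [Submodule.mapQ_apply, Submodule.Quotient.eq] at hw
  have h1 : ((N ^ j) y.1 : V) - z ∈ M (-(j : ℤ) - 1) := by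
    simpa [Submodule.mem_comap, LinearMap.restrict_apply] using hw
  have h2 := neg_mem h1
  simpa [neg_sub] using h2

lemma eq_K (hN : IsNilpotent N) (hM : IsMonodromyFiltration N M) (i : ℤ) :
    M i = Kfil N i := by
  obtain ⟨n₀, hn₀⟩ := hN
  obtain ⟨mono, ⟨a, ha⟩, ⟨b, hb⟩, hsh, -⟩ := id hM
  set n : ℕ := n₀ + b.toNat + (-a).toNat with hn
  have hNpow : ∀ m : ℕ, n₀ ≤ m → N ^ m = 0 := by
    intro m hm
    rw [← Nat.sub_add_cancel hm, pow_add, hn₀, mul_zero]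
  have htop : ∀ i : ℤ, (n : ℤ) ≤ i → M i = ⊤ := by
    intro i hi
    apply hb
    have h1 : b ≤ (b.toNat : ℤ) := Int.self_le_toNat b
    have h2 : b.toNat ≤ n := by omega
    omega
  have hbot : ∀ i : ℤ, i ≤ -(n : ℤ) - 1 → M i = ⊥ := by
    intro i hi
    apply ha
    have h1 : -a ≤ ((-a).toNat : ℤ) := Int.self_le_toNat _
    have h2 : (-a).toNat ≤ n := by omega
    omega
  -- kernels of powers lie low in the filtration
  have hker : ∀ j : ℕ, LinearMap.ker (N ^ j) ≤ M ((j : ℤ) - 1) := by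
    have top : ∀ j : ℕ, n + 1 ≤ j → LinearMap.ker (N ^ j) ≤ M ((j : ℤ) - 1) := by
      intro j hj
      rw [htop ((j : ℤ) - 1) (by omega)]
      exact le_top
    have step : ∀ j : ℕ, LinearMap.ker (N ^ (j + 1)) ≤ M (j : ℤ) →
        LinearMap.ker (N ^ j) ≤ M ((j : ℤ) - 1) := by
      intro j ih x hx
      rw [LinearMap.mem_ker] at hx
      have hx' : (N ^ (j + 1)) x = 0 := pow_apply_zero (Nat.le_succ j) hx
      refine inj_step hM j x (ih (LinearMap.mem_ker.mpr hx')) ?_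
      rw [hx]
      exact zero_mem _
    suffices H : ∀ d j : ℕ, n + 1 - j ≤ d → LinearMap.ker (N ^ j) ≤ M ((j : ℤ) - 1) by
      intro j; exact H (n + 1) j (by omega)
    intro d
    induction d with
    | zero => intro j hj; exact top j (by omega)
    | succ d ih =>
      intro j hj
      by_cases hc : n + 1 ≤ j
      · exact top j hc
      · refine step j ?_
        have h1 := ih (j + 1) (by omega)
        rwa [show ((j + 1 : ℕ) : ℤ) - 1 = (j : ℤ) by push_cast; ring] at h1
  -- the filtration in nonpositive degrees is generated by images
  have hsum : ∀ j : ℕ, M (-(j : ℤ)) ≤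
      ⨆ (l : ℕ) (_ : j ≤ l), Submodule.map (N ^ l) (M (l : ℤ)) := by
    have top : ∀ j : ℕ, n + 1 ≤ j → M (-(j : ℤ)) ≤
        ⨆ (l : ℕ) (_ : j ≤ l), Submodule.map (N ^ l) (M (l : ℤ)) := by
      intro j hj
      rw [hbot (-(j : ℤ)) (by omega)]
      exact bot_le
    have step : ∀ j : ℕ,
        (M (-((j + 1 : ℕ) : ℤ)) ≤ ⨆ (l : ℕ) (_ : j + 1 ≤ l), Submodule.map (N ^ l) (M (l : ℤ))) →
        M (-(j : ℤ)) ≤ ⨆ (l : ℕ) (_ : j ≤ l), Submodule.map (N ^ l) (M (l : ℤ)) := by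
      intro j ih z hz
      obtain ⟨y, hy, hd⟩ := surj_step hM j z hz
      have hm1 : (N ^ j) y ∈ ⨆ (l : ℕ) (_ : j ≤ l), Submodule.map (N ^ l) (M (l : ℤ)) :=
        Submodule.mem_iSup_of_mem j (Submodule.mem_iSup_of_mem le_rfl ⟨y, hy, rfl⟩)
      have hm2 : z - (N ^ j) y ∈ ⨆ (l : ℕ) (_ : j ≤ l), Submodule.map (N ^ l) (M (l : ℤ)) := by
        have h1 : z - (N ^ j) y ∈ M (-((j + 1 : ℕ) : ℤ)) := by
          rwa [show -((j + 1 : ℕ) : ℤ) = -(j : ℤ) - 1 by push_cast; ring]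
        have hle : (⨆ (l : ℕ) (_ : j + 1 ≤ l), Submodule.map (N ^ l) (M (l : ℤ)))
            ≤ ⨆ (l : ℕ) (_ : j ≤ l), Submodule.map (N ^ l) (M (l : ℤ)) :=
          biSup_mono (fun l hl => by omega)
        exact hle (ih h1)
      have h3 := add_mem hm2 hm1
      rwa [sub_add_cancel] at h3
    suffices H : ∀ d j : ℕ, n + 1 - j ≤ d → M (-(j : ℤ)) ≤
        ⨆ (l : ℕ) (_ : j ≤ l), Submodule.map (N ^ l) (M (l : ℤ)) by
      intro j; exact H (n + 1) j (by omega)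
    intro d
    induction d with
    | zero => intro j hj; exact top j (by omega)
    | succ d ih =>
      intro j hj
      by_cases hc : n + 1 ≤ j
      · exact top j hc
      · exact step j (ih (j + 1) (by omega))
  -- inclusion Kfil ≤ M
  have KleM : Kfil N i ≤ M i := by
    apply iSup_le; intro j
    intro x hx
    rw [Submodule.mem_inf] at hx
    obtain ⟨⟨y, rfl⟩, hk⟩ := hx
    rw [LinearMap.mem_ker] at hk
    by_cases hc : 0 < i + j + 1
    · have hy : (N ^ (i + 2 * j + 1).toNat) y = 0 := by
        have he : (i + 2 * j + 1).toNat = (i + j + 1).toNat + j := by omega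
        rw [he, pow_add, Module.End.mul_apply]
        exact hk
      have hy' := hker _ (LinearMap.mem_ker.mpr hy)
      rw [show (((i + 2 * j + 1).toNat : ℤ)) - 1 = i + 2 * (j : ℤ) by omega] at hy'
      have h2 := shiftc hM j (i + 2 * (j : ℤ)) y hy'
      rwa [show i + 2 * (j : ℤ) - 2 * (j : ℤ) = i by ring] at h2
    · have h0 : (i + (j : ℤ) + 1).toNat = 0 := by omega
      rw [h0, pow_zero, Module.End.one_apply] at hk
      rw [hk]
      exact zero_mem _
  -- inclusion M ≤ Kfil
  have top' : ∀ i : ℤ, (n : ℤ) ≤ i → M i ≤ Kfil N i := by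
    intro i hi x hx
    apply mem_Kfil_of 0
    rw [Submodule.mem_inf]
    constructor
    · rw [pow_zero]; exact ⟨x, rfl⟩
    · rw [LinearMap.mem_ker, hNpow ((i + (0 : ℕ) + 1).toNat) (by omega), LinearMap.zero_apply]
  have MleK : M i ≤ Kfil N i := by
    suffices H : ∀ d : ℕ, ∀ i' : ℤ, (n : ℤ) - d ≤ i' → M i' ≤ Kfil N i' by
      exact H ((n - i).toNat) i (by omega)
    intro d
    induction d with
    | zero => intro i' hi'; exact top' i' (by omega)
    | succ d ih =>
      intro i' hi'
      by_cases hc : (n : ℤ) ≤ i'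
      · exact top' i' hc
      rcases lt_or_ge i' 0 with hneg | hpos
      · have hj : -(((-i').toNat : ℕ) : ℤ) = i' := by omega
        calc M i' = M (-(((-i').toNat : ℕ) : ℤ)) := by rw [hj]
          _ ≤ ⨆ (l : ℕ) (_ : (-i').toNat ≤ l), Submodule.map (N ^ l) (M (l : ℤ)) := hsum _
          _ ≤ Kfil N i' := by
              apply iSup_le; intro l; apply iSup_le; intro hl
              rintro x ⟨y, hy, rfl⟩
              have h1 : M (l : ℤ) ≤ Kfil N (l : ℤ) := ih (l : ℤ) (by omega)
              have h2 := Kfil_map (N := N) l (l : ℤ) (h1 hy)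
              exact Kfil_mono (by omega : (l : ℤ) - 2 * (l : ℕ) ≤ i') h2
      · set c : ℕ := (i' + 1).toNat with hcdef
        intro x hx
        have h1 : (N ^ c) x ∈ M (i' - 2 * c) := shiftc hM c i' x hx
        have h2 : i' - 2 * (c : ℤ) = -(((i' + 2).toNat : ℕ) : ℤ) := by omega
        rw [h2] at h1
        have h3 := hsum ((i' + 2).toNat) h1
        have h4 : (⨆ (l : ℕ) (_ : (i' + 2).toNat ≤ l), Submodule.map (N ^ l) (M (l : ℤ)))
            ≤ Submodule.map (N ^ c)
              (⨆ (l : ℕ) (_ : (i' + 2).toNat ≤ l), Submodule.map (N ^ (l - c)) (M (l : ℤ))) := by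
          rw [Submodule.map_iSup]
          apply iSup_mono; intro l
          rw [Submodule.map_iSup]
          apply iSup_mono; intro hl
          rw [← Submodule.map_comp]
          have he : (N ^ c).comp (N ^ (l - c)) = N ^ l := by
            rw [← Module.End.mul_eq_comp, ← pow_add]
            congr 1
            omega
          rw [he]
        obtain ⟨w, hw, hwe⟩ := h4 h3
        have hT : w ∈ Kfil N i' := by
          have hT' : (⨆ (l : ℕ) (_ : (i' + 2).toNat ≤ l),
              Submodule.map (N ^ (l - c)) (M (l : ℤ))) ≤ Kfil N i' := by
            apply iSup_le; intro l; apply iSup_le; intro hl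
            rintro z ⟨u, hu, rfl⟩
            have h6 : M (l : ℤ) ≤ Kfil N (l : ℤ) := ih (l : ℤ) (by omega)
            have h7 := Kfil_map (N := N) (l - c) (l : ℤ) (h6 hu)
            exact Kfil_mono (by omega : (l : ℤ) - 2 * ((l - c : ℕ) : ℤ) ≤ i') h7
          exact hT' hw
        have hker0 : x - w ∈ Kfil N i' := by
          apply mem_Kfil_of 0
          rw [Submodule.mem_inf]
          constructor
          · rw [pow_zero]; exact ⟨x - w, rfl⟩
          · rw [LinearMap.mem_ker]
            have h8 : (i' + (0 : ℕ) + 1).toNat = c := by omega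
            rw [h8, map_sub, hwe, sub_self]
        have h9 := add_mem hker0 hT
        rwa [sub_add_cancel] at h9
  exact le_antisymm MleK KleM

lemma quot_finrank [FiniteDimensional k V] (p p' : Submodule k V) (h : p' ≤ p) :
    finrank k (p ⧸ p'.comap p.subtype) + finrank k p' = finrank k p := by
  have e := Submodule.finrank_quotient_add_finrank (p'.comap p.subtype)
  rwa [(Submodule.comapSubtypeEquivOfLe h).finrank_eq] at e

lemma ann_finrank [FiniteDimensional k V] (W : Submodule k V) :
    finrank k W.dualAnnihilator + finrank k W = finrank k V := by
  rw [← (Submodule.dualQuotEquivDualAnnihilator W).finrank_eq, Subspace.dual_finrank_eq]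
  exact Submodule.finrank_quotient_add_finrank W

lemma dualMap_pow (N : V →ₗ[k] V) (m : ℕ) : N.dualMap ^ m = (N ^ m).dualMap := by
  induction m with
  | zero => ext φ x; rfl
  | succ m ih =>
    rw [pow_succ, ih, pow_succ']
    ext φ x
    simp [LinearMap.dualMap_apply, Module.End.mul_apply]

end MonodromyAux

/-!
Statement 7: let `M` be the monodromy filtration of a nilpotent endomorphism `N` of a
finite-dimensional `k`-vector space `V`. The transpose endomorphism `N^⊤ = N.dualMap`
(`φ ↦ φ ∘ N`) of the dual space is again nilpotent, and its monodromy filtration `M'`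
satisfies `M' i = (M (−i−1))^⊥` (the annihilator) for every `i`.
-/
theorem stmt_7 {k V : Type*} [Field k] [AddCommGroup V] [Module k V]
    [FiniteDimensional k V] (N : V →ₗ[k] V) (hN : IsNilpotent N)
    (M : ℤ → Submodule k V) (hM : IsMonodromyFiltration N M)
    (M' : ℤ → Submodule k (Module.Dual k V))
    (hM' : IsMonodromyFiltration (N.dualMap) M') :
    IsNilpotent N.dualMap ∧ ∀ i : ℤ, M' i = (M (-i - 1)).dualAnnihilator := by
  open MonodromyAux Module in
  have hd : IsNilpotent N.dualMap := by
    obtain ⟨m, hm⟩ := hN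
    exact ⟨m, by rw [MonodromyAux.dualMap_pow, hm]; ext φ x; simp⟩
  refine ⟨hd, fun i => ?_⟩
  have hM'' : IsMonodromyFiltration N.dualMap
      (fun i => (M (-i - 1)).dualAnnihilator) := by
    obtain ⟨mono, ⟨a, ha⟩, ⟨b, hb⟩, hsh, hgr⟩ := id hM
    refine ⟨?_, ⟨-b - 1, ?_⟩, ⟨-a - 1, ?_⟩, ?_, ?_⟩
    · intro i i' h
      exact Submodule.dualAnnihilator_anti (hM.1 (by omega : -i' - 1 ≤ -i - 1))
    · intro i hi
      simp only
      rw [hb (-i - 1) (by omega), Submodule.dualAnnihilator_top]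
    · intro i hi
      simp only
      rw [ha (-i - 1) (by omega), Submodule.dualAnnihilator_bot]
    · intro i φ hφ
      simp only [Submodule.mem_dualAnnihilator] at hφ ⊢
      intro w hw
      rw [LinearMap.dualMap_apply]
      refine hφ (N w) ?_
      have h1 := hsh (-(i - 2) - 1) w hw
      rwa [show -(i - 2) - 1 - 2 = -i - 1 by ring] at h1
    · intro j h1 h2 hp hq
      -- injectivity of the induced map on annihilator quotients
      have hinj : Function.Injective
          (inducedGr (N.dualMap ^ j) ((M (-(j : ℤ) - 1)).dualAnnihilator)
            ((M (-((j : ℤ) - 1) - 1)).dualAnnihilator)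
            ((M (-(-(j : ℤ)) - 1)).dualAnnihilator)
            ((M (-(-(j : ℤ) - 1) - 1)).dualAnnihilator) h1 hp hq h2) := by
        rw [← LinearMap.ker_eq_bot, eq_bot_iff]
        intro u hu
        rw [LinearMap.mem_ker] at hu
        obtain ⟨φ, rfl⟩ := Submodule.Quotient.mk_surjective _ u
        unfold inducedGr at hu
        rw [Submodule.mapQ_apply, Submodule.Quotient.mk_eq_zero] at hu
        simp only [Submodule.mem_comap, LinearMap.restrict_apply,
          Submodule.subtype_apply] at hu
        rw [show -(-(j : ℤ) - 1) - 1 = (j : ℤ) by ring] at hu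
        -- hu : (N.dualMap ^ j) φ.1 ∈ (M j).dualAnnihilator
        rw [Submodule.mem_bot, Submodule.Quotient.mk_eq_zero]
        simp only [Submodule.mem_comap]
        rw [show -((j : ℤ) - 1) - 1 = -(j : ℤ) by ring]
        rw [Submodule.mem_dualAnnihilator]
        intro z hz
        obtain ⟨y, hy, hdz⟩ := MonodromyAux.surj_step hM j z hz
        have hφ1 : ∀ w ∈ M (-(j : ℤ) - 1), (φ : Module.Dual k V) w = 0 :=
          (Submodule.mem_dualAnnihilator _).mp φ.2
        have hφ2 : (φ : Module.Dual k V) ((N ^ j) y) = 0 := by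
          have h3 := (Submodule.mem_dualAnnihilator _).mp hu y hy
          rwa [MonodromyAux.dualMap_pow, LinearMap.dualMap_apply] at h3
        have hzeq : (φ : Module.Dual k V) z
            = (φ : Module.Dual k V) ((N ^ j) y) + (φ : Module.Dual k V) (z - (N ^ j) y) := by
          rw [← map_add]
          congr 1
          abel
        rw [Submodule.subtype_apply, hzeq, hφ2, hφ1 _ hdz, add_zero]
      refine ⟨hinj, (LinearMap.injective_iff_surjective_of_finrank_eq_finrank ?_).mp hinj⟩
      -- dimension count
      have hbij := hM.2.2.2.2 j (MonodromyAux.h1c hM j) (MonodromyAux.h2c hM j)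
        (hM.1 (by omega : (j : ℤ) - 1 ≤ (j : ℤ))) (hM.1 (by omega : -(j : ℤ) - 1 ≤ -(j : ℤ)))
      have e1 := (LinearEquiv.ofBijective _ hbij).finrank_eq
      have f1 := MonodromyAux.quot_finrank (M (j : ℤ)) (M ((j : ℤ) - 1)) (hM.1 (by omega))
      have f2 := MonodromyAux.quot_finrank (M (-(j : ℤ))) (M (-(j : ℤ) - 1)) (hM.1 (by omega))
      have g1 := MonodromyAux.quot_finrank ((M (-(j : ℤ) - 1)).dualAnnihilator)
        ((M (-((j : ℤ) - 1) - 1)).dualAnnihilator) hp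
      have g2 := MonodromyAux.quot_finrank ((M (-(-(j : ℤ)) - 1)).dualAnnihilator)
        ((M (-(-(j : ℤ) - 1) - 1)).dualAnnihilator) hq
      have a1 := MonodromyAux.ann_finrank (M (-(j : ℤ) - 1))
      have a2 := MonodromyAux.ann_finrank (M (-(j : ℤ)))
      have a3 := MonodromyAux.ann_finrank (M ((j : ℤ) - 1))
      have a4 := MonodromyAux.ann_finrank (M (j : ℤ))
      have hS1 : finrank k ((M (-((j : ℤ) - 1) - 1)).dualAnnihilator)
          = finrank k ((M (-(j : ℤ))).dualAnnihilator) := by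
        rw [show -((j : ℤ) - 1) - 1 = -(j : ℤ) by ring]
      have hS2 : finrank k ((M (-(-(j : ℤ)) - 1)).dualAnnihilator)
          = finrank k ((M ((j : ℤ) - 1)).dualAnnihilator) := by
        rw [show -(-(j : ℤ)) - 1 = (j : ℤ) - 1 by ring]
      have hS3 : finrank k ((M (-(-(j : ℤ) - 1) - 1)).dualAnnihilator)
          = finrank k ((M (j : ℤ)).dualAnnihilator) := by
        rw [show -(-(j : ℤ) - 1) - 1 = (j : ℤ) by ring]
      beta_reduce
      omega
  have e1 := MonodromyAux.eq_K hd hM' i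
  have e2 := MonodromyAux.eq_K hd hM'' i
  exact e1.trans e2.symm
end

section
/- Let k be a field, G a finite group whose order is invertible in k, V and W k-vector spaces, c : V → W a k-linear map, and for each σ ∈ G a k-linear map v(σ) : W → V. Assume that ρ_V(σ) := id_V + v(σ) ∘ c and ρ_W(σ) := id_W + c ∘ v(σ) define k-linear actions of G on V and W (i.e. ρ_V : G → GL(V) and ρ_W : G → GL(W) are group homomorphisms), and that each v(σ) is G-equivariant, i.e. v(σ) ∘ ρ_W(τ) = ρ_V(τ) ∘ v(σ) for all σ, τ ∈ G. Let π_V := |G|^{-1} Σ_{σ ∈ G} ρ_V(σ) and π_W := |G|^{-1} Σ_{σ ∈ G} ρ_W(σ) be the averaging projectors onto the G-invariants. Then c maps ker π_V into ker π_W and restricts to a k-linear isomorphism ker π_V → ker π_W, whose inverse is the restriction of −|G|^{-1} Σ_{σ ∈ G} v(σ). -/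
/-!
Statement 9: Let k be a field, G a finite group whose order is invertible in k,
c : V → W, and v(σ) : W → V for σ ∈ G, such that ρ_V(σ) = id + v(σ)∘c and
ρ_W(σ) = id + c∘v(σ) define k-linear G-actions and each v(σ) is G-equivariant.
Then c restricts to an isomorphism ker π_V → ker π_W (the complements of the
invariants), whose inverse is the restriction of −|G|⁻¹ Σ_σ v(σ).
-/

theorem stmt_9 {k V W : Type*} [Field k]
    [AddCommGroup V] [Module k V] [AddCommGroup W] [Module k W]
    {G : Type*} [Group G] [Fintype G]
    (hG : (Fintype.card G : k) ≠ 0)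
    (c : V →ₗ[k] W) (v : G → (W →ₗ[k] V))
    (ρV : G → (V →ₗ[k] V)) (ρW : G → (W →ₗ[k] W))
    (hρV : ∀ σ : G, ρV σ = LinearMap.id + (v σ).comp c)
    (hρW : ∀ σ : G, ρW σ = LinearMap.id + c.comp (v σ))
    (hV1 : ρV 1 = LinearMap.id)
    (hVmul : ∀ σ τ : G, ρV (σ * τ) = (ρV σ).comp (ρV τ))
    (hW1 : ρW 1 = LinearMap.id)
    (hWmul : ∀ σ τ : G, ρW (σ * τ) = (ρW σ).comp (ρW τ))
    (hequiv : ∀ σ τ : G, (v σ).comp (ρW τ) = (ρV τ).comp (v σ))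
    -- the averaging projectors onto the `G`-invariants:
    (πV : V →ₗ[k] V) (hπV : πV = (Fintype.card G : k)⁻¹ • ∑ σ : G, ρV σ)
    (πW : W →ₗ[k] W) (hπW : πW = (Fintype.card G : k)⁻¹ • ∑ σ : G, ρW σ)
    -- the candidate inverse `u = −|G|⁻¹ Σ_σ v(σ)`:
    (u : W →ₗ[k] V) (hu : u = -((Fintype.card G : k)⁻¹ • ∑ σ : G, v σ)) :
    (∀ x ∈ LinearMap.ker πV, c x ∈ LinearMap.ker πW) ∧
    (∀ y ∈ LinearMap.ker πW, u y ∈ LinearMap.ker πV) ∧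
    (∀ x ∈ LinearMap.ker πV, u (c x) = x) ∧
    (∀ y ∈ LinearMap.ker πW, c (u y) = y) := by

  have ha : (Fintype.card G : k)⁻¹ * (Fintype.card G : k) = 1 := inv_mul_cancel₀ hG
  -- pointwise formulas
  have hπVx : ∀ x : V, πV x = x - u (c x) := by
    intro x
    simp only [hπV, hu, LinearMap.smul_apply, LinearMap.sum_apply, LinearMap.neg_apply]
    have : ∀ σ : G, (ρV σ) x = x + (v σ) (c x) := by
      intro σ; simp [hρV σ]
    rw [Finset.sum_congr rfl fun σ _ => this σ, Finset.sum_add_distrib,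
      Finset.sum_const, smul_add, Finset.card_univ, ← Nat.cast_smul_eq_nsmul k,
      smul_smul, ha, one_smul, sub_neg_eq_add]
  have hπWy : ∀ y : W, πW y = y - c (u y) := by
    intro y
    simp only [hπW, hu, LinearMap.smul_apply, LinearMap.sum_apply, LinearMap.neg_apply,
      map_neg, map_smul, map_sum]
    have : ∀ σ : G, (ρW σ) y = y + c ((v σ) y) := by
      intro σ; simp [hρW σ]
    rw [Finset.sum_congr rfl fun σ _ => this σ, Finset.sum_add_distrib,
      Finset.sum_const, smul_add, Finset.card_univ, ← Nat.cast_smul_eq_nsmul k,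
      smul_smul, ha, one_smul, sub_neg_eq_add]
  -- intertwining: πW ∘ c = c ∘ πV
  have hcomm1 : ∀ x : V, πW (c x) = c (πV x) := by
    intro x
    simp only [hπV, hπW, LinearMap.smul_apply, LinearMap.sum_apply, map_smul, map_sum]
    congr 1
    refine Finset.sum_congr rfl fun σ _ => ?_
    simp [hρV σ, hρW σ]
  -- intertwining: πV ∘ u = u ∘ πW
  have hcomm2 : ∀ y : W, πV (u y) = u (πW y) := by
    intro y
    have key : ∀ σ : G, πV ((v σ) y) = (v σ) (πW y) := by
      intro σ
      simp only [hπV, hπW, LinearMap.smul_apply, LinearMap.sum_apply, map_smul, map_sum]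
      congr 1
      refine Finset.sum_congr rfl fun τ _ => ?_
      exact (LinearMap.congr_fun (hequiv σ τ) y).symm
    simp only [hu, LinearMap.neg_apply, LinearMap.smul_apply, LinearMap.sum_apply,
      map_neg, map_smul, map_sum]
    congr 2
    exact Finset.sum_congr rfl fun σ _ => key σ
  refine ⟨?_, ?_, ?_, ?_⟩
  · intro x hx
    rw [LinearMap.mem_ker] at hx ⊢
    rw [hcomm1, hx, map_zero]
  · intro y hy
    rw [LinearMap.mem_ker] at hy ⊢
    rw [hcomm2, hy, map_zero]
  · intro x hx
    rw [LinearMap.mem_ker] at hx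
    have := hπVx x
    rw [hx] at this
    exact (sub_eq_zero.mp this.symm).symm
  · intro y hy
    rw [LinearMap.mem_ker] at hy
    have := hπWy y
    rw [hy] at this
    exact (sub_eq_zero.mp this.symm).symm
end
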